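/- Every element of the set {(a,b,c,d) ∈ C_i^4 : ab = cd} is conjugate, by a single unit quaternion acting diagonally, to g(θ₁,θ₂) = (i, e^{kθ₁}i, e^{k(θ₂-θ₁)}i, e^{kθ₂}i) for some θ₁, θ₂ ∈ [0,2π). -/

import Mathlib

open Quaternion Real

noncomputable section

/-- The quaternion unit `i`. -/
def qi : ℍ[ℝ] := ⟨0,1,0,0⟩
/-- The quaternion unit `j`. -/
def qj : ℍ[ℝ] := ⟨0,0,1,0⟩
/-- The quaternion unit `k`. -/
def qk : ℍ[ℝ] := ⟨0,0,0,1⟩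
/-- `e^{kθ} = cos θ + k sin θ`. -/
def ek (θ : ℝ) : ℍ[ℝ] := ⟨Real.cos θ, 0, 0, Real.sin θ⟩
/-- The set of purely imaginary unit quaternions. -/
def Ci : Set ℍ[ℝ] := {q | q.re = 0 ∧ ‖q‖ = 1}

lemma normSq_of_unit (u : ℍ[ℝ]) (hu : ‖u‖ = 1) : normSq u = 1 := by
  rw [normSq_eq_norm_mul_self, hu]; ring

lemma unit_of_normSq (u : ℍ[ℝ]) (hu : normSq u = 1) : ‖u‖ = 1 := by
  have h := normSq_eq_norm_mul_self u
  nlinarith [norm_nonneg u]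

lemma inv_of_unit (u : ℍ[ℝ]) (hu : ‖u‖ = 1) : u⁻¹ = star u := by
  rw [Quaternion.inv_def, normSq_of_unit u hu]; simp

lemma coords_of_unit (u : ℍ[ℝ]) (hu : ‖u‖ = 1) :
    u.re^2 + u.imI^2 + u.imJ^2 + u.imK^2 = 1 := by
  have := normSq_of_unit u hu; rwa [normSq_def'] at this

lemma unit_ne_zero (u : ℍ[ℝ]) (hu : ‖u‖ = 1) : u ≠ 0 := by
  intro h; rw [h] at hu; simp at hu

lemma exists_angle (x y : ℝ) (h : x^2 + y^2 = 1) :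
    ∃ θ, Real.cos θ = x ∧ Real.sin θ = y := by
  have hz : (⟨x, y⟩ : ℂ) ≠ 0 := by
    intro hc
    rw [Complex.ext_iff] at hc
    simp at hc
    rw [hc.1, hc.2] at h; norm_num at h
  have habs : ‖(⟨x, y⟩ : ℂ)‖ = 1 := by
    rw [Complex.norm_def, Complex.normSq_mk]
    rw [show x*x + y*y = 1 by nlinarith, Real.sqrt_one]
  refine ⟨Complex.arg ⟨x, y⟩, ?_, ?_⟩
  · rw [Complex.cos_arg hz, habs]; simp
  · rw [Complex.sin_arg, habs]; simp

lemma reduce_angle (θ : ℝ) : ∃ θ', 0 ≤ θ' ∧ θ' < 2*π ∧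
    Real.cos θ' = Real.cos θ ∧ Real.sin θ' = Real.sin θ := by
  have hpi : (0:ℝ) < 2*π := by positivity
  refine ⟨θ - ⌊θ/(2*π)⌋ * (2*π), ?_, ?_, ?_, ?_⟩
  · have e : (θ/(2*π))*(2*π) = θ := div_mul_cancel₀ _ (ne_of_gt hpi)
    nlinarith [mul_le_mul_of_nonneg_right (Int.floor_le (θ/(2*π))) hpi.le]
  · have e : (θ/(2*π))*(2*π) = θ := div_mul_cancel₀ _ (ne_of_gt hpi)
    nlinarith [mul_lt_mul_of_pos_right (Int.lt_floor_add_one (θ/(2*π))) hpi]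
  · rw [show θ - ⌊θ/(2*π)⌋ * (2*π) = θ + (-⌊θ/(2*π)⌋ : ℤ) * (2*π) by push_cast; ring,
      Real.cos_add_int_mul_two_pi]
  · rw [show θ - ⌊θ/(2*π)⌋ * (2*π) = θ + (-⌊θ/(2*π)⌋ : ℤ) * (2*π) by push_cast; ring,
      Real.sin_add_int_mul_two_pi]

/-- The rotation `cos φ + i sin φ`. -/
def erot (p s : ℝ) : ℍ[ℝ] := ⟨p,s,0,0⟩

lemma erot_norm (p s : ℝ) (hps : p^2 + s^2 = 1) : ‖erot p s‖ = 1 := by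
  apply unit_of_normSq; rw [normSq_def']; simpa [erot] using hps

lemma conj_rot (p s : ℝ) (hps : p^2 + s^2 = 1) (q : ℍ[ℝ]) (hq : q.re = 0) :
    erot p s * q * (erot p s)⁻¹ =
    ⟨0, q.imI, (p^2-s^2)*q.imJ - 2*p*s*q.imK, 2*p*s*q.imJ + (p^2-s^2)*q.imK⟩ := by
  have hu := erot_norm p s hps
  rw [inv_of_unit _ hu]
  ext <;> simp [Quaternion.re_mul, Quaternion.imI_mul, Quaternion.imJ_mul,
      Quaternion.imK_mul, hq] <;> simp [erot, hq] <;>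
    [ring; linear_combination q.imI * hps; ring; ring]

lemma imaginary_sq (a : ℍ[ℝ]) (ha : a ∈ Ci) : a * a = -1 := by
  obtain ⟨h0, h1⟩ := ha
  have hc := coords_of_unit a h1
  ext <;> simp [Quaternion.re_mul, Quaternion.imI_mul, Quaternion.imJ_mul,
      Quaternion.imK_mul, h0] <;> nlinarith [hc]

lemma conj_of_comm (u t x : ℍ[ℝ]) (hu : ‖u‖ = 1) (h : u * x = t * u) :
    u * x * u⁻¹ = t := by
  rw [h, mul_assoc, mul_inv_cancel₀ (unit_ne_zero u hu), mul_one]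

lemma conj_to_i (a : ℍ[ℝ]) (ha : a ∈ Ci) : ∃ u : ℍ[ℝ], ‖u‖ = 1 ∧ u * a * u⁻¹ = qi := by
  by_cases hma : a = -qi
  · have hj : ‖qj‖ = 1 := by
      apply unit_of_normSq; rw [normSq_def']; simp [qj]
    refine ⟨qj, hj, ?_⟩
    rw [inv_of_unit _ hj, hma]
    ext <;> simp [Quaternion.re_mul, Quaternion.imI_mul, Quaternion.imJ_mul,
      Quaternion.imK_mul] <;> simp [qi, qj]
  · have h0 : qi + a ≠ 0 := by
      intro hcon
      exact hma (by rw [eq_neg_of_add_eq_zero_right hcon])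
    have hsq : a * a = -1 := imaginary_sq a ha
    have hisq : qi * qi = -1 := by
      ext <;> simp [Quaternion.re_mul, Quaternion.imI_mul, Quaternion.imJ_mul,
        Quaternion.imK_mul] <;> simp [qi]
    have key : (qi + a) * a = qi * (qi + a) := by
      rw [add_mul, mul_add, hsq, hisq, add_comm]
    have hn : ‖qi + a‖ ≠ 0 := norm_ne_zero_iff.mpr h0
    have hun : ‖‖qi + a‖⁻¹ • (qi + a)‖ = 1 := by
      rw [norm_smul, norm_inv, norm_norm, inv_mul_cancel₀ hn]
    refine ⟨‖qi + a‖⁻¹ • (qi + a), hun, ?_⟩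
    apply conj_of_comm _ _ _ hun
    rw [smul_mul_assoc, key, mul_smul_comm]

lemma conj_mem_Ci (u q : ℍ[ℝ]) (hu : ‖u‖ = 1) (hq : q ∈ Ci) : u * q * u⁻¹ ∈ Ci := by
  have hne : u ≠ 0 := unit_ne_zero u hu
  constructor
  · have tr : ∀ x y : ℍ[ℝ], (x * y).re = (y * x).re := by
      intro x y; rw [Quaternion.re_mul, Quaternion.re_mul]; ring
    rw [tr (u * q) u⁻¹, inv_mul_cancel_left₀ hne, hq.1]
  · rw [norm_mul, norm_mul, hu, hq.2, norm_inv, hu]; norm_num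

lemma ek_mul_qi (θ : ℝ) : ek θ * qi = ⟨0, Real.cos θ, Real.sin θ, 0⟩ := by
  ext <;> simp [Quaternion.re_mul, Quaternion.imI_mul, Quaternion.imJ_mul,
    Quaternion.imK_mul] <;> simp [ek, qi]


lemma sum_sq_pos (u v : ℝ) (h : ¬(u = 0 ∧ v = 0)) : 0 < u^2 + v^2 := by
  rcases not_and_or.mp h with h' | h'
  · have h1 : 0 < u^2 := by positivity
    linarith [sq_nonneg v]
  · have h1 : 0 < v^2 := by positivity
    linarith [sq_nonneg u]

lemma conjMulConj (u x y : ℍ[ℝ]) (hu : u ≠ 0) :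
    (u * x * u⁻¹) * (u * y * u⁻¹) = u * (x * y) * u⁻¹ := by
  simp only [mul_assoc, inv_mul_cancel_left₀ hu]

lemma step2 (b c d : ℍ[ℝ]) (hb : b ∈ Ci) (hc : c ∈ Ci) (hd : d ∈ Ci)
    (h : qi * b = c * d) :
    ∃ (u : ℍ[ℝ]) (θ₁ θ₂ : ℝ), ‖u‖ = 1 ∧
      0 ≤ θ₁ ∧ θ₁ < 2 * π ∧ 0 ≤ θ₂ ∧ θ₂ < 2 * π ∧
      u * qi * u⁻¹ = qi ∧ u * b * u⁻¹ = ek θ₁ * qi ∧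
      u * c * u⁻¹ = ek (θ₂ - θ₁) * qi ∧ u * d * u⁻¹ = ek θ₂ * qi := by
  obtain ⟨hb0, hb1⟩ := hb
  obtain ⟨hc0, hc1⟩ := hc
  obtain ⟨hd0, hd1⟩ := hd
  have hbn := coords_of_unit b hb1
  have hcn := coords_of_unit c hc1
  have hdn := coords_of_unit d hd1
  rw [hb0] at hbn; rw [hc0] at hcn; rw [hd0] at hdn
  have e0 := congrArg QuaternionAlgebra.re h
  have e1 := congrArg QuaternionAlgebra.imI h
  have e2 := congrArg QuaternionAlgebra.imJ h
  have e3 := congrArg QuaternionAlgebra.imK h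
  simp only [Quaternion.re_mul, Quaternion.imI_mul, Quaternion.imJ_mul,
    Quaternion.imK_mul] at e0 e1 e2 e3
  rw [hb0, hc0, hd0] at e0 e1 e2 e3
  simp only [qi] at e0 e1 e2 e3
  norm_num at e0 e1 e2 e3
  -- e0 : -b.imI = -(c.imI * d.imI) - c.imJ * d.imJ - c.imK * d.imK
  -- e1 : 0 = c.imJ * d.imK - c.imK * d.imJ
  -- e2 : -b.imK = -(c.imI * d.imK) + c.imK * d.imI
  -- e3 : b.imJ = c.imI * d.imJ - c.imJ * d.imI
  obtain ⟨x, y, hxy, hbp, hcp, hdp⟩ :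
      ∃ x y : ℝ, x^2 + y^2 = 1 ∧ b.imJ * y = b.imK * x ∧ c.imJ * y = c.imK * x ∧
        d.imJ * y = d.imK * x := by
    by_cases hcz : c.imJ = 0 ∧ c.imK = 0
    · obtain ⟨hc2, hc3⟩ := hcz
      by_cases hdz : d.imJ = 0 ∧ d.imK = 0
      · obtain ⟨hd2, hd3⟩ := hdz
        rw [hc3, hd3] at e2; norm_num at e2
        refine ⟨1, 0, by norm_num, by simp [e2], by simp [hc3], by simp [hd3]⟩
      · have hn : 0 < d.imJ^2 + d.imK^2 := by
          rcases not_and_or.mp hdz with h' | h' <;>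
            nlinarith [sq_nonneg d.imJ, sq_nonneg d.imK, sq_abs d.imJ, sq_abs d.imK,
              mul_pos (abs_pos.mpr h') (abs_pos.mpr h')]
        have hnpos : 0 < Real.sqrt (d.imJ^2 + d.imK^2) := Real.sqrt_pos.mpr hn
        have hne := ne_of_gt hnpos
        refine ⟨d.imJ / Real.sqrt (d.imJ^2 + d.imK^2),
                d.imK / Real.sqrt (d.imJ^2 + d.imK^2), ?_, ?_, ?_, ?_⟩
        · field_simp
          rw [Real.sq_sqrt hn.le]
        · field_simp
          linear_combination d.imK * e3 + d.imJ * e2 + d.imI * e1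
        · field_simp
          linear_combination -e1
        · field_simp
    · have hn : 0 < c.imJ^2 + c.imK^2 := sum_sq_pos _ _ hcz
      have hnpos : 0 < Real.sqrt (c.imJ^2 + c.imK^2) := Real.sqrt_pos.mpr hn
      have hne := ne_of_gt hnpos
      refine ⟨c.imJ / Real.sqrt (c.imJ^2 + c.imK^2),
              c.imK / Real.sqrt (c.imJ^2 + c.imK^2), ?_, ?_, ?_, ?_⟩
      · field_simp
        rw [Real.sq_sqrt hn.le]
      · field_simp
        linear_combination c.imK * e3 + c.imJ * e2 + c.imI * e1
      · field_simp
      · field_simp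
        linear_combination e1
  set B := x * b.imJ + y * b.imK with hB
  set C := x * c.imJ + y * c.imK with hC
  set D := x * d.imJ + y * d.imK with hD
  have hB1 : b.imI^2 + B^2 = 1 := by
    linear_combination hbn + (b.imJ^2 + b.imK^2) * hxy - (y*b.imJ - x*b.imK) * hbp
  have hD1 : d.imI^2 + D^2 = 1 := by
    linear_combination hdn + (d.imJ^2 + d.imK^2) * hxy - (y*d.imJ - x*d.imK) * hdp
  have hb1eq : b.imI = c.imI * d.imI + C * D := by
    linear_combination -e0 + (y*d.imJ - x*d.imK) * hcp - (c.imJ*d.imJ + c.imK*d.imK) * hxy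
  have hBeq : B = c.imI * D - C * d.imI := by
    linear_combination x * e3 - y * e2
  obtain ⟨ψ₁, hcψ₁, hsψ₁⟩ := exists_angle b.imI B hB1
  obtain ⟨θ₁, hθ₁0, hθ₁2, hcθ₁, hsθ₁⟩ := reduce_angle ψ₁
  rw [hcψ₁] at hcθ₁; rw [hsψ₁] at hsθ₁
  obtain ⟨ψ₂, hcψ₂, hsψ₂⟩ := exists_angle d.imI D hD1
  obtain ⟨θ₂, hθ₂0, hθ₂2, hcθ₂, hsθ₂⟩ := reduce_angle ψ₂
  rw [hcψ₂] at hcθ₂; rw [hsψ₂] at hsθ₂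
  obtain ⟨ψ, hcψ, hsψ⟩ := exists_angle x (-y) (by linear_combination hxy)
  set p := Real.cos (ψ/2) with hp
  set s := Real.sin (ψ/2) with hs
  have hps : p^2 + s^2 = 1 := by
    rw [hp, hs]; rw [add_comm]; exact Real.sin_sq_add_cos_sq _
  have hx2 : p^2 - s^2 = x := by
    rw [hp, hs, ← Real.cos_two_mul', show 2*(ψ/2) = ψ by ring, hcψ]
  have hy2 : 2*p*s = -y := by
    rw [show 2*p*s = Real.sin (2*(ψ/2)) by rw [Real.sin_two_mul]; ring,
      show 2*(ψ/2) = ψ by ring, hsψ]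
  refine ⟨erot p s, θ₁, θ₂, erot_norm p s hps, hθ₁0, hθ₁2, hθ₂0, hθ₂2, ?_, ?_, ?_, ?_⟩
  · rw [conj_rot p s hps qi rfl]
    ext <;> simp [qi]
  · rw [conj_rot p s hps b hb0, ek_mul_qi]
    ext
    · rfl
    · exact hcθ₁.symm
    · rw [hx2, hy2, hsθ₁]; ring
    · rw [hx2, hy2]; linear_combination -hbp
  · rw [conj_rot p s hps c hc0, ek_mul_qi]
    ext
    · rfl
    · rw [Real.cos_sub, hcθ₁, hsθ₁, hcθ₂, hsθ₂]
      linear_combination -d.imI * hb1eq - D * hBeq - c.imI * hD1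
    · rw [hx2, hy2, Real.sin_sub, hcθ₁, hsθ₁, hcθ₂, hsθ₂]
      linear_combination -D * hb1eq + d.imI * hBeq - C * hD1
    · rw [hx2, hy2]; linear_combination -hcp
  · rw [conj_rot p s hps d hd0, ek_mul_qi]
    ext
    · rfl
    · exact hcθ₂.symm
    · rw [hx2, hy2, hsθ₂]; ring
    · rw [hx2, hy2]; linear_combination -hdp

/-- Every quadruple in `C_i⁴` satisfying the pillowcase relation `ab = cd` is diagonally
conjugate by a unit quaternion to `g(θ₁,θ₂) = (i, e^{kθ₁}i, e^{k(θ₂-θ₁)}i, e^{kθ₂}i)`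
for some `θ₁, θ₂ ∈ [0, 2π)`. -/
theorem pillowcase_normal_form (a b c d : ℍ[ℝ]) (ha : a ∈ Ci) (hb : b ∈ Ci)
    (hc : c ∈ Ci) (hd : d ∈ Ci) (h : a * b = c * d) :
    ∃ (u : ℍ[ℝ]) (θ₁ θ₂ : ℝ), ‖u‖ = 1 ∧
      0 ≤ θ₁ ∧ θ₁ < 2 * π ∧ 0 ≤ θ₂ ∧ θ₂ < 2 * π ∧
      u * a * u⁻¹ = qi ∧ u * b * u⁻¹ = ek θ₁ * qi ∧
      u * c * u⁻¹ = ek (θ₂ - θ₁) * qi ∧ u * d * u⁻¹ = ek θ₂ * qi := by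
  obtain ⟨u₀, hu₀, hu₀a⟩ := conj_to_i a ha
  have hne₀ : u₀ ≠ 0 := unit_ne_zero u₀ hu₀
  have hrel : qi * (u₀ * b * u₀⁻¹) = (u₀ * c * u₀⁻¹) * (u₀ * d * u₀⁻¹) := by
    rw [← hu₀a, conjMulConj _ _ _ hne₀, conjMulConj _ _ _ hne₀, h]
  obtain ⟨v, θ₁, θ₂, hv, h10, h12, h20, h22, hvqi, hvb, hvc, hvd⟩ :=
    step2 (u₀ * b * u₀⁻¹) (u₀ * c * u₀⁻¹) (u₀ * d * u₀⁻¹)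
      (conj_mem_Ci u₀ b hu₀ hb) (conj_mem_Ci u₀ c hu₀ hc) (conj_mem_Ci u₀ d hu₀ hd) hrel
  have hcc : ∀ x : ℍ[ℝ], (v * u₀) * x * (v * u₀)⁻¹ = v * (u₀ * x * u₀⁻¹) * v⁻¹ := by
    intro x; rw [mul_inv_rev]; simp only [mul_assoc]
  refine ⟨v * u₀, θ₁, θ₂, ?_, h10, h12, h20, h22, ?_, ?_, ?_, ?_⟩
  · rw [norm_mul, hv, hu₀]; norm_num
  · rw [hcc, hu₀a, hvqi]
  · rw [hcc, hvb]
  · rw [hcc, hvc]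
  · rw [hcc, hvd]
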